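/- arXiv:1905.13722 — 5 statements merged into one kernel-verified Lean document; each statement's English description precedes it below -/
import Mathlib

section
/- Let V and W be real vector spaces, let ‖·‖_p, ‖·‖_n, ‖·‖_{p+1}, ‖·‖_{n+1} be seminorms on V, let ‖·‖ be a seminorm on W, and let K ≥ 0 be a real constant. Suppose P : V × V → W satisfies ‖P(v,w)‖ ≤ (1/2)·K·(‖v‖_p·‖w‖_{n+1} + ‖v‖_n·‖w‖_{p+1}) for all v, w ∈ V. Then for all v, b, w, c ∈ V one has √(‖P(v,w) − P(b,c)‖² + ‖P(v,c) − P(b,w)‖²) ≤ (1/2)·(√2·K)·( √(‖v‖_p² + ‖b‖_p²)·√(‖w‖_{n+1}² + ‖c‖_{n+1}²) + √(‖v‖_n² + ‖b‖_n²)·√(‖w‖_{p+1}² + ‖c‖_{p+1}²) ). (Equivalently: the two-component map 𝓟((v,b),(w,c)) := (P(v,w) − P(b,c), P(v,c) − P(b,w)) satisfies the same 'basic' inequality as P, in the product seminorms, with constant √2·K.) -/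
private lemma cs2 (p q r s : ℝ) :
    p * q + r * s ≤ Real.sqrt (p ^ 2 + r ^ 2) * Real.sqrt (q ^ 2 + s ^ 2) := by
  have h : (p * q + r * s) ^ 2 ≤ (p ^ 2 + r ^ 2) * (q ^ 2 + s ^ 2) := by
    nlinarith [sq_nonneg (p * s - r * q)]
  have h2 := Real.sqrt_le_sqrt h
  rw [Real.sqrt_mul (by positivity)] at h2
  refine le_trans ?_ h2
  rw [Real.sqrt_sq_eq_abs]
  exact le_abs_self _

private lemma tri2 (p q r s : ℝ) :
    Real.sqrt ((p + q) ^ 2 + (r + s) ^ 2) ≤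
      Real.sqrt (p ^ 2 + r ^ 2) + Real.sqrt (q ^ 2 + s ^ 2) := by
  have key : (p + q) ^ 2 + (r + s) ^ 2 ≤
      (Real.sqrt (p ^ 2 + r ^ 2) + Real.sqrt (q ^ 2 + s ^ 2)) ^ 2 := by
    have h1 : Real.sqrt (p ^ 2 + r ^ 2) ^ 2 = p ^ 2 + r ^ 2 := Real.sq_sqrt (by positivity)
    have h2 : Real.sqrt (q ^ 2 + s ^ 2) ^ 2 = q ^ 2 + s ^ 2 := Real.sq_sqrt (by positivity)
    have h3 := cs2 p q r s
    nlinarith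
  calc Real.sqrt ((p + q) ^ 2 + (r + s) ^ 2)
      ≤ Real.sqrt ((Real.sqrt (p ^ 2 + r ^ 2) + Real.sqrt (q ^ 2 + s ^ 2)) ^ 2) :=
        Real.sqrt_le_sqrt key
    _ = _ := Real.sqrt_sq (by positivity)

private lemma swapcs (a1 a2 b1 b2 : ℝ) :
    Real.sqrt ((a1 * b1 + a2 * b2) ^ 2 + (a1 * b2 + a2 * b1) ^ 2) ≤
      Real.sqrt 2 * (Real.sqrt (a1 ^ 2 + a2 ^ 2) * Real.sqrt (b1 ^ 2 + b2 ^ 2)) := by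
  have key : (a1 * b1 + a2 * b2) ^ 2 + (a1 * b2 + a2 * b1) ^ 2 ≤
      2 * ((a1 ^ 2 + a2 ^ 2) * (b1 ^ 2 + b2 ^ 2)) := by
    nlinarith [sq_nonneg (a1 * b1 - a2 * b2), sq_nonneg (a1 * b2 - a2 * b1)]
  calc Real.sqrt ((a1 * b1 + a2 * b2) ^ 2 + (a1 * b2 + a2 * b1) ^ 2)
      ≤ Real.sqrt (2 * ((a1 ^ 2 + a2 ^ 2) * (b1 ^ 2 + b2 ^ 2))) := Real.sqrt_le_sqrt key
    _ = Real.sqrt 2 * (Real.sqrt (a1 ^ 2 + a2 ^ 2) * Real.sqrt (b1 ^ 2 + b2 ^ 2)) := by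
        rw [Real.sqrt_mul (by norm_num), Real.sqrt_mul (by positivity)]

/-- the two-component map associated to a bilinear-type map `P`
satisfies the "basic" inequality in the product seminorms, with constant `√2·K`. -/
theorem twoComponent_basic_inequality
    {V W : Type*} [AddCommGroup V] [Module ℝ V] [AddCommGroup W] [Module ℝ W]
    (np nn np1 nn1 : Seminorm ℝ V) (N : Seminorm ℝ W) (K : ℝ) (hK : 0 ≤ K)
    (P : V → V → W)
    (hP : ∀ v w : V, N (P v w) ≤ (1/2) * K * (np v * nn1 w + nn v * np1 w)) :
    ∀ v b w c : V,
      Real.sqrt ((N (P v w - P b c)) ^ 2 + (N (P v c - P b w)) ^ 2) ≤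
        (1/2) * (Real.sqrt 2 * K) *
          (Real.sqrt ((np v) ^ 2 + (np b) ^ 2) * Real.sqrt ((nn1 w) ^ 2 + (nn1 c) ^ 2) +
            Real.sqrt ((nn v) ^ 2 + (nn b) ^ 2) * Real.sqrt ((np1 w) ^ 2 + (np1 c) ^ 2)) := by
  intro v b w c
  set a1 := np v; set a2 := np b
  set b1 := nn1 w; set b2 := nn1 c
  set c1 := nn v; set c2 := nn b
  set d1 := np1 w; set d2 := np1 c
  -- pointwise bounds on the two components
  have hX : N (P v w - P b c) ≤
      (1/2) * K * (a1 * b1 + c1 * d1) + (1/2) * K * (a2 * b2 + c2 * d2) := by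
    calc N (P v w - P b c) ≤ N (P v w) + N (P b c) := map_sub_le_add N _ _
      _ ≤ _ := add_le_add (hP v w) (hP b c)
  have hY : N (P v c - P b w) ≤
      (1/2) * K * (a1 * b2 + c1 * d2) + (1/2) * K * (a2 * b1 + c2 * d1) := by
    calc N (P v c - P b w) ≤ N (P v c) + N (P b w) := map_sub_le_add N _ _
      _ ≤ _ := add_le_add (hP v c) (hP b w)
  have hN1 : (0:ℝ) ≤ N (P v w - P b c) := apply_nonneg N _
  have hN2 : (0:ℝ) ≤ N (P v c - P b w) := apply_nonneg N _
  have step1 : Real.sqrt ((N (P v w - P b c)) ^ 2 + (N (P v c - P b w)) ^ 2) ≤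
      Real.sqrt (((1/2) * K * (a1 * b1 + c1 * d1) + (1/2) * K * (a2 * b2 + c2 * d2)) ^ 2 +
        ((1/2) * K * (a1 * b2 + c1 * d2) + (1/2) * K * (a2 * b1 + c2 * d1)) ^ 2) := by
    apply Real.sqrt_le_sqrt
    have := pow_le_pow_left₀ hN1 hX 2
    have := pow_le_pow_left₀ hN2 hY 2
    linarith
  -- regroup: X = p + q, Y = r + s with p,r the "a,b" parts and q,s the "c,d" parts
  have regroup :
      ((1/2) * K * (a1 * b1 + c1 * d1) + (1/2) * K * (a2 * b2 + c2 * d2)) ^ 2 +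
        ((1/2) * K * (a1 * b2 + c1 * d2) + (1/2) * K * (a2 * b1 + c2 * d1)) ^ 2 =
      ((1/2) * K * (a1 * b1 + a2 * b2) + (1/2) * K * (c1 * d1 + c2 * d2)) ^ 2 +
        ((1/2) * K * (a1 * b2 + a2 * b1) + (1/2) * K * (c1 * d2 + c2 * d1)) ^ 2 := by
    ring
  rw [regroup] at step1
  refine step1.trans ?_
  have tria := tri2 ((1/2) * K * (a1 * b1 + a2 * b2)) ((1/2) * K * (c1 * d1 + c2 * d2))
      ((1/2) * K * (a1 * b2 + a2 * b1)) ((1/2) * K * (c1 * d2 + c2 * d1))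
  refine tria.trans ?_
  have hc : (0:ℝ) ≤ (1/2) * K := by positivity
  have e1 : Real.sqrt (((1/2) * K * (a1 * b1 + a2 * b2)) ^ 2 +
      ((1/2) * K * (a1 * b2 + a2 * b1)) ^ 2) =
      (1/2) * K * Real.sqrt ((a1 * b1 + a2 * b2) ^ 2 + (a1 * b2 + a2 * b1) ^ 2) := by
    rw [show ((1/2) * K * (a1 * b1 + a2 * b2)) ^ 2 + ((1/2) * K * (a1 * b2 + a2 * b1)) ^ 2 =
        ((1/2) * K) ^ 2 * ((a1 * b1 + a2 * b2) ^ 2 + (a1 * b2 + a2 * b1) ^ 2) by ring,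
      Real.sqrt_mul (by positivity), Real.sqrt_sq hc]
  have e2 : Real.sqrt (((1/2) * K * (c1 * d1 + c2 * d2)) ^ 2 +
      ((1/2) * K * (c1 * d2 + c2 * d1)) ^ 2) =
      (1/2) * K * Real.sqrt ((c1 * d1 + c2 * d2) ^ 2 + (c1 * d2 + c2 * d1) ^ 2) := by
    rw [show ((1/2) * K * (c1 * d1 + c2 * d2)) ^ 2 + ((1/2) * K * (c1 * d2 + c2 * d1)) ^ 2 =
        ((1/2) * K) ^ 2 * ((c1 * d1 + c2 * d2) ^ 2 + (c1 * d2 + c2 * d1) ^ 2) by ring,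
      Real.sqrt_mul (by positivity), Real.sqrt_sq hc]
  rw [e1, e2]
  have s1 := swapcs a1 a2 b1 b2
  have s2 := swapcs c1 c2 d1 d2
  have m1 := mul_le_mul_of_nonneg_left s1 hc
  have m2 := mul_le_mul_of_nonneg_left s2 hc
  calc (1/2) * K * Real.sqrt ((a1 * b1 + a2 * b2) ^ 2 + (a1 * b2 + a2 * b1) ^ 2) +
        (1/2) * K * Real.sqrt ((c1 * d1 + c2 * d2) ^ 2 + (c1 * d2 + c2 * d1) ^ 2)
      ≤ (1/2) * K * (Real.sqrt 2 * (Real.sqrt (a1 ^ 2 + a2 ^ 2) * Real.sqrt (b1 ^ 2 + b2 ^ 2))) +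
        (1/2) * K * (Real.sqrt 2 * (Real.sqrt (c1 ^ 2 + c2 ^ 2) * Real.sqrt (d1 ^ 2 + d2 ^ 2))) :=
        add_le_add m1 m2
    _ = _ := by ring
end

section
/- Let V be a real vector space equipped with two positive semidefinite symmetric bilinear forms ⟨·|·⟩_p and ⟨·|·⟩_n, inducing seminorms ‖v‖_p := √⟨v|v⟩_p and ‖v‖_n := √⟨v|v⟩_n. Let G ≥ 0 be a real constant and let P : V × V → V be bilinear and satisfy the Kato-type inequality |⟨P(v,w)|w⟩_p| ≤ (1/2)·G·(‖v‖_p·‖w‖_n + ‖v‖_n·‖w‖_p)·‖w‖_p for all v, w ∈ V. Then for all v, b, w, c ∈ V one has |⟨P(v,w) − P(b,c)|w⟩_p + ⟨P(v,c) − P(b,w)|c⟩_p| ≤ (1/2)·(√2·G)·( √(‖v‖_p² + ‖b‖_p²)·√(‖w‖_n² + ‖c‖_n²) + √(‖v‖_n² + ‖b‖_n²)·√(‖w‖_p² + ‖c‖_p²) )·√(‖w‖_p² + ‖c‖_p²). (Equivalently: the two-component map 𝓟 satisfies the Kato-type inequality in the product inner product ⟨(v,b)|(w,c)⟩_p :=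 ⟨v|w⟩_p + ⟨b|c⟩_p and the product seminorms, with constant √2·G.) -/

theorem kato_aux (s G Vp Vn Wp Wn pA pB nA nB Sp Sn Dp Dn A B E : ℝ)
    (hs : 0 ≤ s) (hG : 0 ≤ G)
    (hVp : 0 ≤ Vp) (hVn : 0 ≤ Vn) (hWp : 0 ≤ Wp) (hWn : 0 ≤ Wn)
    (hpA : 0 ≤ pA) (hpB : 0 ≤ pB) (hnA : 0 ≤ nA) (hnB : 0 ≤ nB)
    (hSp : Sp ≤ s * Vp) (hSn : Sn ≤ s * Vn)
    (hDp : Dp ≤ s * Vp) (hDn : Dn ≤ s * Vn)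
    (hp : pA ^ 2 + pB ^ 2 = 2 * Wp ^ 2) (hn : nA ^ 2 + nB ^ 2 = 2 * Wn ^ 2)
    (hA : |A| ≤ (1/2) * G * (Sp * nA + Sn * pA) * pA)
    (hB : |B| ≤ (1/2) * G * (Dp * nB + Dn * pB) * pB)
    (hE : 2 * E = A + B) :
    |E| ≤ (1/2) * (s * G) * (Vp * Wn + Vn * Wp) * Wp := by
  have hrhs : (nA ^ 2 + nB ^ 2) * (pA ^ 2 + pB ^ 2) = (2 * Wn * Wp) ^ 2 := by
    rw [hn, hp]; ring
  have cauchy : nA * pA + nB * pB ≤ 2 * Wn * Wp := by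
    have h1 : (nA * pA + nB * pB) ^ 2 ≤ (2 * Wn * Wp) ^ 2 := by
      rw [← hrhs]; nlinarith [sq_nonneg (nA * pB - nB * pA)]
    have h2 : 0 ≤ nA * pA + nB * pB := by positivity
    have h3 := Real.sqrt_le_sqrt h1
    rwa [Real.sqrt_sq h2, Real.sqrt_sq (by positivity)] at h3
  have t1 : Sp * nA * pA ≤ s * Vp * (nA * pA) := by
    rw [mul_assoc]; exact mul_le_mul_of_nonneg_right hSp (mul_nonneg hnA hpA)
  have t3 : Dp * nB * pB ≤ s * Vp * (nB * pB) := by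
    rw [mul_assoc]; exact mul_le_mul_of_nonneg_right hDp (mul_nonneg hnB hpB)
  have t2 : Sn * pA * pA ≤ s * Vn * pA ^ 2 := by
    rw [mul_assoc, sq]; exact mul_le_mul_of_nonneg_right hSn (mul_nonneg hpA hpA)
  have t4 : Dn * pB * pB ≤ s * Vn * pB ^ 2 := by
    rw [mul_assoc, sq]; exact mul_le_mul_of_nonneg_right hDn (mul_nonneg hpB hpB)
  have c2 : s * Vp * (nA * pA + nB * pB) ≤ s * Vp * (2 * Wn * Wp) :=
    mul_le_mul_of_nonneg_left cauchy (mul_nonneg hs hVp)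
  have t24 : s * Vn * pA ^ 2 + s * Vn * pB ^ 2 = s * Vn * (2 * Wp ^ 2) := by
    rw [← hp]; ring
  have hfin : G * (Sp * nA * pA + Sn * pA * pA + (Dp * nB * pB + Dn * pB * pB)) ≤
      G * (s * Vp * (2 * Wn * Wp) + s * Vn * (2 * Wp ^ 2)) :=
    mul_le_mul_of_nonneg_left (by linarith) hG
  have habs : 2 * |E| ≤ |A| + |B| := by
    calc 2 * |E| = |A + B| := by rw [← hE, abs_mul]; norm_num
    _ ≤ |A| + |B| := abs_add_le _ _
  nlinarith [habs, hA, hB, hfin]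

/-- the two-component map associated to a bilinear map `P`
satisfies the Kato-type inequality in the product inner product / seminorms,
with constant `√2·G`. -/
theorem twoComponent_kato_inequality
    {V : Type*} [AddCommGroup V] [Module ℝ V]
    (Bp Bn : V →ₗ[ℝ] V →ₗ[ℝ] ℝ)
    (hBp_symm : ∀ x y : V, Bp x y = Bp y x) (hBp_pos : ∀ x : V, 0 ≤ Bp x x)
    (hBn_symm : ∀ x y : V, Bn x y = Bn y x) (hBn_pos : ∀ x : V, 0 ≤ Bn x x)
    (G : ℝ) (hG : 0 ≤ G)
    (P : V →ₗ[ℝ] V →ₗ[ℝ] V)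
    (hKato : ∀ v w : V, |Bp (P v w) w| ≤ (1/2) * G *
      (Real.sqrt (Bp v v) * Real.sqrt (Bn w w) + Real.sqrt (Bn v v) * Real.sqrt (Bp w w)) *
        Real.sqrt (Bp w w)) :
    ∀ v b w c : V,
      |Bp (P v w - P b c) w + Bp (P v c - P b w) c| ≤
        (1/2) * (Real.sqrt 2 * G) *
          (Real.sqrt (Bp v v + Bp b b) * Real.sqrt (Bn w w + Bn c c) +
            Real.sqrt (Bn v v + Bn b b) * Real.sqrt (Bp w w + Bp c c)) *
          Real.sqrt (Bp w w + Bp c c) := by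
  intro v b w c
  -- sum comparison for diagonals: B(x+y)(x+y) ≤ 2(Bxx + Byy), and parallelogram
  have parallelogram : ∀ (B : V →ₗ[ℝ] V →ₗ[ℝ] ℝ) (x y : V),
      B (x - y) (x - y) + B (x + y) (x + y) = 2 * (B x x + B y y) := by
    intro B x y
    simp only [map_add, map_sub, LinearMap.add_apply, LinearMap.sub_apply]
    ring
  have sqrt_diag : ∀ (B : V →ₗ[ℝ] V →ₗ[ℝ] ℝ), (∀ x : V, 0 ≤ B x x) → ∀ x y : V,
      Real.sqrt (B (x + y) (x + y)) ≤ Real.sqrt 2 * Real.sqrt (B x x + B y y) := by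
    intro B hB x y
    rw [← Real.sqrt_mul (by norm_num)]
    apply Real.sqrt_le_sqrt
    have h1 := hB (x - y)
    have h2 := parallelogram B x y
    linarith
  have sqrt_diag' : ∀ (B : V →ₗ[ℝ] V →ₗ[ℝ] ℝ), (∀ x : V, 0 ≤ B x x) → ∀ x y : V,
      Real.sqrt (B (x - y) (x - y)) ≤ Real.sqrt 2 * Real.sqrt (B x x + B y y) := by
    intro B hB x y
    rw [← Real.sqrt_mul (by norm_num)]
    apply Real.sqrt_le_sqrt
    have h1 := hB (x + y)
    have h2 := parallelogram B x y
    linarith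
  have sq_par : ∀ (B : V →ₗ[ℝ] V →ₗ[ℝ] ℝ), (∀ x : V, 0 ≤ B x x) → ∀ x y : V,
      Real.sqrt (B (x - y) (x - y)) ^ 2 + Real.sqrt (B (x + y) (x + y)) ^ 2 =
        2 * Real.sqrt (B x x + B y y) ^ 2 := by
    intro B hB x y
    rw [Real.sq_sqrt (hB _), Real.sq_sqrt (hB _),
      Real.sq_sqrt (add_nonneg (hB x) (hB y))]
    exact parallelogram B x y
  have key : 2 * (Bp (P v w - P b c) w + Bp (P v c - P b w) c) =
      Bp (P (v + b) (w - c)) (w - c) + Bp (P (v - b) (w + c)) (w + c) := by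
    simp only [map_add, map_sub, LinearMap.add_apply, LinearMap.sub_apply]
    ring
  exact kato_aux (Real.sqrt 2) G
    (Real.sqrt (Bp v v + Bp b b)) (Real.sqrt (Bn v v + Bn b b))
    (Real.sqrt (Bp w w + Bp c c)) (Real.sqrt (Bn w w + Bn c c))
    (Real.sqrt (Bp (w - c) (w - c))) (Real.sqrt (Bp (w + c) (w + c)))
    (Real.sqrt (Bn (w - c) (w - c))) (Real.sqrt (Bn (w + c) (w + c)))
    (Real.sqrt (Bp (v + b) (v + b))) (Real.sqrt (Bn (v + b) (v + b)))
    (Real.sqrt (Bp (v - b) (v - b))) (Real.sqrt (Bn (v - b) (v - b)))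
    (Bp (P (v + b) (w - c)) (w - c)) (Bp (P (v - b) (w + c)) (w + c))
    (Bp (P v w - P b c) w + Bp (P v c - P b w) c)
    (Real.sqrt_nonneg 2) hG
    (Real.sqrt_nonneg _) (Real.sqrt_nonneg _) (Real.sqrt_nonneg _) (Real.sqrt_nonneg _)
    (Real.sqrt_nonneg _) (Real.sqrt_nonneg _) (Real.sqrt_nonneg _) (Real.sqrt_nonneg _)
    (sqrt_diag Bp hBp_pos v b) (sqrt_diag Bn hBn_pos v b)
    (sqrt_diag' Bp hBp_pos v b) (sqrt_diag' Bn hBn_pos v b)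
    (sq_par Bp hBp_pos w c) (sq_par Bn hBn_pos w c)
    (hKato (v + b) (w - c)) (hKato (v - b) (w + c))
    key
end

section
/- Let H be a real inner product space, T ∈ (0, +∞], and let w : [0,T) → H be differentiable. Let φ, ε : [0,T) → ℝ with ε(t) ≥ 0 for all t, and assume: (a) ⟨w'(t), w(t)⟩ ≤ φ(t)·‖w(t)‖² + ε(t)·‖w(t)‖ for every t ∈ [0,T); (b) ‖w'(t)‖ ≤ ε(t) for every t ∈ [0,T) with w(t) = 0. Then the function t ↦ ‖w(t)‖ satisfies, at every t ∈ [0,T), the Dini-derivative inequality d⁺‖w(·)‖(t) := limsup_{h→0⁺} (‖w(t+h)‖ − ‖w(t)‖)/h ≤ φ(t)·‖w(t)‖ + ε(t). -/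
open Filter Topology Set
open scoped InnerProductSpace

/-! Where `w t ≠ 0` the norm is differentiable with derivative `⟪w t, w'⟫ / ‖w t‖`, and where
`w t = 0` the quotient `‖w (t + h)‖ / h` is the norm of the difference quotient of `w`, so it
tends to `‖w'‖`. Either way the upper right Dini derivative of `‖w‖` is a genuine right
derivative, which hypotheses (a) and (b) bound. -/

noncomputable def upperRightDiniDeriv (f : ℝ → ℝ) (x : ℝ) : EReal :=
  limsup (fun h : ℝ ↦ (((f (x + h) - f x) / h : ℝ) : EReal)) (𝓝[>] 0)

theorem upperRightDiniDeriv_eq_of_tendsto {f : ℝ → ℝ} {x L : ℝ}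
    (hf : Tendsto (fun h ↦ (f (x + h) - f x) / h) (𝓝[>] 0) (𝓝 L)) :
    upperRightDiniDeriv f x = L :=
  ((continuous_coe_real_ereal.tendsto L).comp hf).limsup_eq

theorem HasDerivWithinAt.tendsto_slope_zero_right {F : Type*} [NormedAddCommGroup F]
    [NormedSpace ℝ F] {f : ℝ → F} {f' : F} {s : Set ℝ} {x : ℝ}
    (hf : HasDerivWithinAt f f' s x) (hs : s ∈ 𝓝[>] x) :
    Tendsto (fun h ↦ h⁻¹ • (f (x + h) - f x)) (𝓝[>] 0) (𝓝 f') := by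
  have hslope := (hasDerivWithinAt_iff_tendsto_slope' (s := Ioi x) (lt_irrefl x)).1
    (hf.mono_of_mem_nhdsWithin hs)
  have hmap : 𝓝[>] x = map (x + ·) (𝓝[>] 0) := by simp
  rw [hmap, tendsto_map'_iff] at hslope
  simpa [Function.comp_def, slope] using hslope

theorem HasDerivWithinAt.upperRightDiniDeriv_eq {f : ℝ → ℝ} {f' : ℝ} {s : Set ℝ} {x : ℝ}
    (hf : HasDerivWithinAt f f' s x) (hs : s ∈ 𝓝[>] x) :
    upperRightDiniDeriv f x = f' :=
  upperRightDiniDeriv_eq_of_tendsto <| by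
    simpa only [smul_eq_mul, inv_mul_eq_div] using hf.tendsto_slope_zero_right hs

section Norm

variable {E : Type*} [NormedAddCommGroup E] [InnerProductSpace ℝ E]
  {w : ℝ → E} {w' : E} {s : Set ℝ} {t : ℝ}

theorem HasDerivWithinAt.norm (hw : HasDerivWithinAt w w' s t) (h0 : w t ≠ 0) :
    HasDerivWithinAt (‖w ·‖) (⟪w t, w'⟫_ℝ / ‖w t‖) s t := by
  have h := hw.norm_sq.sqrt (pow_ne_zero 2 (norm_ne_zero_iff.2 h0))
  simp only [Real.sqrt_sq (norm_nonneg _)] at h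
  convert h using 1
  field_simp

theorem HasDerivWithinAt.upperRightDiniDeriv_norm_of_eq_zero (hw : HasDerivWithinAt w w' s t)
    (hs : s ∈ 𝓝[>] t) (h0 : w t = 0) :
    upperRightDiniDeriv (‖w ·‖) t = ‖w'‖ := by
  refine upperRightDiniDeriv_eq_of_tendsto ((hw.tendsto_slope_zero_right hs).norm.congr' ?_)
  filter_upwards [self_mem_nhdsWithin] with h (hh : 0 < h)
  rw [h0, sub_zero, norm_zero, sub_zero, norm_smul, norm_inv, Real.norm_of_nonneg hh.le,
    inv_mul_eq_div]

end Norm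

theorem dini_deriv_norm_le_general
    {H : Type*} [NormedAddCommGroup H] [InnerProductSpace ℝ H]
    (T : EReal)
    (w w' : ℝ → H) (φ ε : ℝ → ℝ)
    (hw : ∀ t ∈ {t : ℝ | 0 ≤ t ∧ (t : EReal) < T},
      HasDerivWithinAt w (w' t) {t : ℝ | 0 ≤ t ∧ (t : EReal) < T} t)
    (ha : ∀ t ∈ {t : ℝ | 0 ≤ t ∧ (t : EReal) < T},
      (inner ℝ (w' t) (w t) : ℝ) ≤ φ t * ‖w t‖ ^ 2 + ε t * ‖w t‖)
    (hb : ∀ t ∈ {t : ℝ | 0 ≤ t ∧ (t : EReal) < T}, w t = 0 → ‖w' t‖ ≤ ε t) :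
    ∀ t ∈ {t : ℝ | 0 ≤ t ∧ (t : EReal) < T},
      Filter.limsup (fun h : ℝ => (((‖w (t + h)‖ - ‖w t‖) / h : ℝ) : EReal))
          (nhdsWithin 0 (Set.Ioi 0))
        ≤ ((φ t * ‖w t‖ + ε t : ℝ) : EReal) := by
  intro t ht
  have hS : {t : ℝ | 0 ≤ t ∧ (t : EReal) < T} ∈ 𝓝[>] t :=
    mem_nhdsWithin.2 ⟨{x : ℝ | (x : EReal) < T}, isOpen_Iio.preimage continuous_coe_real_ereal,
      ht.2, fun x ⟨hxT, hx⟩ ↦ ⟨ht.1.trans (le_of_lt hx), hxT⟩⟩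
  change upperRightDiniDeriv (‖w ·‖) t ≤ _
  by_cases h0 : w t = 0
  · rw [(hw t ht).upperRightDiniDeriv_norm_of_eq_zero hS h0, h0, norm_zero, mul_zero, zero_add]
    exact_mod_cast hb t ht h0
  · have hpos : 0 < ‖w t‖ := norm_pos_iff.2 h0
    rw [((hw t ht).norm h0).upperRightDiniDeriv_eq hS, EReal.coe_le_coe_iff, real_inner_comm,
      div_le_iff₀ hpos]
    linarith [ha t ht]

/-- Dini-derivative inequality for the norm of a differentiable
curve in a real inner product space (core of the paper's Lemma 4.2). -/
theorem dini_deriv_norm_le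
    {H : Type*} [NormedAddCommGroup H] [InnerProductSpace ℝ H]
    (T : EReal) (hT : 0 < T)
    (w w' : ℝ → H) (φ ε : ℝ → ℝ)
    (hw : ∀ t ∈ {t : ℝ | 0 ≤ t ∧ (t : EReal) < T},
      HasDerivWithinAt w (w' t) {t : ℝ | 0 ≤ t ∧ (t : EReal) < T} t)
    (hε : ∀ t ∈ {t : ℝ | 0 ≤ t ∧ (t : EReal) < T}, 0 ≤ ε t)
    (ha : ∀ t ∈ {t : ℝ | 0 ≤ t ∧ (t : EReal) < T},
      (inner ℝ (w' t) (w t) : ℝ) ≤ φ t * ‖w t‖ ^ 2 + ε t * ‖w t‖)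
    (hb : ∀ t ∈ {t : ℝ | 0 ≤ t ∧ (t : EReal) < T}, w t = 0 → ‖w' t‖ ≤ ε t) :
    ∀ t ∈ {t : ℝ | 0 ≤ t ∧ (t : EReal) < T},
      Filter.limsup (fun h : ℝ => (((‖w (t + h)‖ - ‖w t‖) / h : ℝ) : EReal))
          (nhdsWithin 0 (Set.Ioi 0))
        ≤ ((φ t * ‖w t‖ + ε t : ℝ) : EReal) :=
  dini_deriv_norm_le_general T w w' φ ε hw ha hb
end

section
/- Let μ ≥ 0, Ĝ > 0, r₀ ≥ 0, g ≥ 0 and c ≥ 0 be real numbers, with e_μ and T_c defined as follows: e_μ(t) := (1 − e^{−μt})/μ if μ > 0 and e_0(t) := t; T_c := +∞ if μ > 0 and r₀ ≤ μ/Ĝ; T_c := −(1/μ)·log(1 − μ/(Ĝ·r₀)) if μ > 0 and r₀ > μ/Ĝ; T_c := 1/(Ĝ·r₀) if μ = 0 (with T_c := +∞ when r₀ = 0). Let R(t) := r₀·e^{−μt}/(1 − Ĝ·r₀·e_μ(t)) for t ∈ [0,T_c). Then the function R_p(t) := c·e^{−μt}/(1 − Ĝ·r₀·e_μ(t))^{g/Ĝ}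 is C¹ on [0,T_c) and satisfies R_p'(t) = −μ·R_p(t) + g·R(t)·R_p(t) for all t ∈ [0,T_c), with R_p(0) = c. -/
/-!
Write `D(t) = 1 - Ĝ r₀ e_μ(t)`, so that `R_p = c e^{-μt} D^{-g/Ĝ}` and `R = r₀ e^{-μt} / D`.
Since `e_μ' = e^{-μt}`, the logarithmic derivative of `D^{-g/Ĝ}` is `(g/Ĝ) Ĝ r₀ e^{-μt} / D = g R`,
which is the linear equation. The control time `T_c` is the first positive zero of `D` (`∞` if there is
none), so `D > 0` on `[0, T_c)` and the power `D^{g/Ĝ}` is differentiable there.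
-/

/-- The function `e_μ` of the paper: `e_μ(t) = (1 - e^{-μt})/μ` for `μ > 0`, `e_0(t) = t`. -/
noncomputable def eMu (μ t : ℝ) : ℝ := if 0 < μ then (1 - Real.exp (-μ * t)) / μ else t

/-- The maximal control time `T_c` of the paper's Lemma 5.1. -/
noncomputable def controlTime (μ G r₀ : ℝ) : EReal :=
  if 0 < μ then
    (if r₀ ≤ μ / G then (⊤ : EReal)
     else ((-(1 / μ) * Real.log (1 - μ / (G * r₀)) : ℝ) : EReal))
  else
    (if r₀ = 0 then (⊤ : EReal) else ((1 / (G * r₀) : ℝ) : EReal))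

/-- The explicit solution of the Riccati control Cauchy problem. -/
noncomputable def controlSol (μ G r₀ t : ℝ) : ℝ :=
  r₀ * Real.exp (-μ * t) / (1 - G * r₀ * eMu μ t)

/-- The higher-order control function of the paper's Lemma 5.1(ii). -/
noncomputable def controlSolP (μ G r₀ g c t : ℝ) : ℝ :=
  c * Real.exp (-μ * t) / (1 - G * r₀ * eMu μ t) ^ (g / G)

open Real

lemma eMu_of_pos {μ : ℝ} (hμ : 0 < μ) (t : ℝ) : eMu μ t = (1 - exp (-μ * t)) / μ :=
  if_pos hμ

lemma eMu_of_nonpos {μ : ℝ} (hμ : μ ≤ 0) (t : ℝ) : eMu μ t = t :=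
  if_neg hμ.not_gt

@[simp]
lemma eMu_zero_right (μ : ℝ) : eMu μ 0 = 0 := by
  unfold eMu; split_ifs <;> simp

lemma hasDerivAt_eMu {μ : ℝ} (hμ : 0 ≤ μ) (t : ℝ) : HasDerivAt (eMu μ) (exp (-μ * t)) t := by
  rcases hμ.lt_or_eq with hpos | rfl
  · have hexp : HasDerivAt (fun s => exp (-μ * s)) (exp (-μ * t) * -μ) t :=
      ((hasDerivAt_id t).const_mul (-μ)).exp.congr_deriv (by simp)
    rw [funext (eMu_of_pos hpos)]
    exact ((hexp.const_sub 1).div_const μ).congr_deriv (by field_simp [hpos.ne'])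
  · simpa [funext (eMu_of_nonpos le_rfl)] using hasDerivAt_id' t

lemma mul_one_sub_exp_lt_of_le {μ a t : ℝ} (hμ : 0 < μ) (ha : a ≤ μ) (ht : 0 ≤ t) :
    a * (1 - exp (-μ * t)) < μ := by
  have hexp_pos : 0 < exp (-μ * t) := exp_pos _
  have hexp_le : exp (-μ * t) ≤ 1 := exp_le_one_iff.2 (by nlinarith)
  nlinarith

lemma mul_one_sub_exp_lt_of_lt_log {μ a t : ℝ} (hμ : 0 < μ) (ha : μ < a)
    (ht : t < -(1 / μ) * log (1 - μ / a)) : a * (1 - exp (-μ * t)) < μ := by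
  have ha_pos : 0 < a := hμ.trans ha
  have hbase : 0 < 1 - μ / a := by rw [sub_pos, div_lt_one ha_pos]; exact ha
  have hlog : log (1 - μ / a) < -μ * t := by
    have := mul_lt_mul_of_pos_left ht hμ
    rw [← mul_assoc, mul_neg, mul_one_div_cancel hμ.ne'] at this
    linarith
  have hexp : 1 - μ / a < exp (-μ * t) := (log_lt_iff_lt_exp hbase).1 hlog
  calc a * (1 - exp (-μ * t)) < a * (μ / a) := by gcongr; linarith
    _ = μ := mul_div_cancel₀ μ ha_pos.ne'

lemma one_sub_mul_eMu_pos {μ G r₀ t : ℝ} (hμ : 0 ≤ μ) (hG : 0 < G) (ht : 0 ≤ t)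
    (hT : (t : EReal) < controlTime μ G r₀) : 0 < 1 - G * r₀ * eMu μ t := by
  unfold controlTime at hT
  rcases hμ.lt_or_eq with hpos | rfl
  · rw [if_pos hpos] at hT
    rw [eMu_of_pos hpos, sub_pos, mul_div_assoc', div_lt_one hpos]
    split_ifs at hT with hr
    · exact mul_one_sub_exp_lt_of_le hpos ((le_div_iff₀' hG).1 hr) ht
    · rw [EReal.coe_lt_coe_iff] at hT
      exact mul_one_sub_exp_lt_of_lt_log hpos ((div_lt_iff₀' hG).1 (not_le.1 hr)) hT
  · rw [if_neg (lt_irrefl 0)] at hT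
    rw [eMu_of_nonpos le_rfl]
    split_ifs at hT with hr
    · simp [hr]
    · rw [EReal.coe_lt_coe_iff] at hT
      have hGr : 0 < G * r₀ := one_div_pos.1 (ht.trans_lt hT)
      have := (lt_div_iff₀' hGr).1 hT
      linarith

lemma hasDerivAt_controlSolP {μ G r₀ t : ℝ} (g c : ℝ) (hμ : 0 ≤ μ) (hG : G ≠ 0)
    (hD : 0 < 1 - G * r₀ * eMu μ t) :
    HasDerivAt (controlSolP μ G r₀ g c)
      (-μ * controlSolP μ G r₀ g c t + g * controlSol μ G r₀ t * controlSolP μ G r₀ g c t) t := by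
  have hexp : HasDerivAt (fun s => c * exp (-μ * s)) (c * (exp (-μ * t) * -μ)) t :=
    (((hasDerivAt_id t).const_mul (-μ)).exp.congr_deriv (by simp)).const_mul c
  have hpow : HasDerivAt (fun s => (1 - G * r₀ * eMu μ s) ^ (g / G))
      (-(G * r₀ * exp (-μ * t)) * (g / G) * (1 - G * r₀ * eMu μ t) ^ (g / G - 1)) t :=
    (((hasDerivAt_eMu hμ t).const_mul (G * r₀)).const_sub 1).rpow_const (Or.inl hD.ne')
  refine (hexp.div hpow (rpow_pos_of_pos hD _).ne').congr_deriv ?_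
  rw [rpow_sub_one hD.ne']
  unfold controlSolP controlSol
  field_simp
  ring

theorem higher_order_control_solution_general
    (μ G r₀ g c : ℝ) (hμ : 0 ≤ μ) (hG : 0 < G) :
    (∀ t : ℝ, 0 ≤ t → (t : EReal) < controlTime μ G r₀ →
      HasDerivWithinAt (controlSolP μ G r₀ g c)
        (-μ * controlSolP μ G r₀ g c t + g * controlSol μ G r₀ t * controlSolP μ G r₀ g c t)
        {s : ℝ | 0 ≤ s ∧ (s : EReal) < controlTime μ G r₀} t) ∧
    controlSolP μ G r₀ g c 0 = c := by
  refine ⟨fun t ht hT => ?_, by simp [controlSolP]⟩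
  exact (hasDerivAt_controlSolP g c hμ hG.ne' (one_sub_mul_eMu_pos hμ hG ht hT)).hasDerivWithinAt

/-- Lemma 5.1(ii) of the paper: `R_p(t) = c e^{-μt}/(1 - Ĝ r₀ e_μ(t))^{g/Ĝ}`
is a C¹ solution on `[0,T_c)` of the linear Cauchy problem `R_p' = -μ R_p + g R R_p`,
`R_p(0) = c`, with `R` the Riccati control solution. -/
theorem higher_order_control_solution
    (μ G r₀ g c : ℝ) (hμ : 0 ≤ μ) (hG : 0 < G) (hr : 0 ≤ r₀) (hg : 0 ≤ g) (hc : 0 ≤ c) :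
    (∀ t : ℝ, 0 ≤ t → (t : EReal) < controlTime μ G r₀ →
      HasDerivWithinAt (controlSolP μ G r₀ g c)
        (-μ * controlSolP μ G r₀ g c t + g * controlSol μ G r₀ t * controlSolP μ G r₀ g c t)
        {s : ℝ | 0 ≤ s ∧ (s : EReal) < controlTime μ G r₀} t) ∧
    controlSolP μ G r₀ g c 0 = c :=
  higher_order_control_solution_general μ G r₀ g c hμ hG
end

section
/- Fix an integer d ≥ 2, real ν, η ≥ 0, and a finite set G ⊂ ℤ^d \ {0} with G = −G. Suppose the families (γ_k)_{k∈G}, (β_k)_{k∈G} of differentiable ℂ^d-valued functions solve the Galerkin MHD system on [0,T) and satisfy, for every t ∈ [0,T) and every k ∈ G, the reality and divergence-free conditions: γ_{−k}(t) = conj(γ_k(t)), β_{−k}(t) = conj(β_k(t)), k·γ_k(t) = 0, k·β_k(t) = 0. Set E(t) := Σ_{k∈G} ( |γ_k(t)|² + |β_k(t)|² ). Then for all t ∈ [0,T): E'(t) = −2·Σ_{k∈G} |k|²·( ν·|γ_k(t)|² + η·|β_k(t)|² ) ≤ −2·min(ν,η)·E(t); consequently E(t) ≤ E(0)·e^{−2·min(ν,η)·t}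 for all t ∈ [0,T), and if ν = η = 0 then E(t) = E(0) for all t ∈ [0,T). -/
noncomputable section

/-- Bilinear "dot product" (no conjugation) of an integer mode `k` with a vector `x ∈ ℂ^d`. -/
def zdot {d : ℕ} (k : Fin d → ℤ) (x : EuclideanSpace ℂ (Fin d)) : ℂ :=
  ∑ i, (k i : ℂ) * x i

/-- Squared Euclidean norm `|k|²` of an integer mode. -/
def knormSq {d : ℕ} (k : Fin d → ℤ) : ℝ := ∑ i, ((k i : ℝ)) ^ 2

/-- The integer mode `k` regarded as a vector of `ℂ^d`. -/
def intVec {d : ℕ} (k : Fin d → ℤ) : EuclideanSpace ℂ (Fin d) := WithLp.toLp 2 (fun i => (k i : ℂ))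

/-- The Leray projection `ℒ_k x = x - ((k·x)/|k|²) k` on Fourier mode `k`. -/
def leray {d : ℕ} (k : Fin d → ℤ) (x : EuclideanSpace ℂ (Fin d)) : EuclideanSpace ℂ (Fin d) :=
  x - ((zdot k x) / ((knormSq k : ℝ) : ℂ)) • intVec k

/-- The time domain `[0, T)`, `T ∈ (0, +∞]`. -/
def galDomain (T : EReal) : Set ℝ := {t : ℝ | 0 ≤ t ∧ (t : EReal) < T}

/-- A solution of the Galerkin MHD system on `[0,T)` supported by the finite mode set `G`:
families `γ_k, β_k` (extended by `0` outside `G`) solving, for `k ∈ G`,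
`dγ_k/dt = -ν|k|²γ_k - i(2π)^{-d/2} Σ_{h∈G} [(γ_h·(k-h)) ℒ_k γ_{k-h} - (β_h·(k-h)) ℒ_k β_{k-h}]`,
`dβ_k/dt = -η|k|²β_k - i(2π)^{-d/2} Σ_{h∈G} [(γ_h·(k-h)) ℒ_k β_{k-h} - (β_h·(k-h)) ℒ_k γ_{k-h}]`. -/
def IsGalerkinSolution {d : ℕ} (ν η : ℝ) (G : Finset (Fin d → ℤ)) (T : EReal)
    (γ β : (Fin d → ℤ) → ℝ → EuclideanSpace ℂ (Fin d)) : Prop :=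
  (∀ k : Fin d → ℤ, k ∉ G → ∀ t : ℝ, γ k t = 0 ∧ β k t = 0) ∧
  (∀ k ∈ G, ∀ t ∈ galDomain T,
    HasDerivWithinAt (γ k)
      (((-(ν * knormSq k) : ℝ) : ℂ) • γ k t
        - (Complex.I * ((((2 * Real.pi) ^ (-(d : ℝ) / 2) : ℝ)) : ℂ)) •
          ∑ h ∈ G, (zdot (k - h) (γ h t) • leray k (γ (k - h) t)
                    - zdot (k - h) (β h t) • leray k (β (k - h) t)))
      (galDomain T) t ∧
    HasDerivWithinAt (β k)
      (((-(η * knormSq k) : ℝ) : ℂ) • β k t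
        - (Complex.I * ((((2 * Real.pi) ^ (-(d : ℝ) / 2) : ℝ)) : ℂ)) •
          ∑ h ∈ G, (zdot (k - h) (γ h t) • leray k (β (k - h) t)
                    - zdot (k - h) (β h t) • leray k (γ (k - h) t)))
      (galDomain T) t)

end

/-!
Pairing the equations with `γ_k` and `β_k` gives `E' = 2 Re Σ_k (⟪γ_k, γ_k'⟫ + ⟪β_k, β_k'⟫)`.
Since `γ_k` and `β_k` are orthogonal to `k`, the Leray projections drop out, and by the reality
condition `⟪w_k, y⟫ = y · w_{-k}`. The nonlinear terms thus become values of the trilinear form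
`b(u, v, w) = Σ_{k,h} ((k-h)·u_h) (v_{k-h} · w_{-k})`, which is antisymmetric in `(v, w)` when `u`
is divergence-free (substitute `k ↦ h - k`). Hence `b(γ,γ,γ) = b(γ,β,β) = 0` and
`b(β,β,γ) = -b(β,γ,β)`, and only the dissipative terms survive. As `|k|² ≥ 1` on nonzero
integer modes, `E' ≤ -2 min(ν, η) E`, and Grönwall's inequality gives the decay.
-/

open Finset ComplexConjugate

theorem Finset.sum_comp_sub_left {A M : Type*} [AddCommGroup A] [AddCommMonoid M]
    {G : Finset A} {f : A → M} (a : A) (hf : ∀ k ∉ G, f k = 0)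
    (hf' : ∀ k, a - k ∉ G → f k = 0) :
    ∑ k ∈ G, f (a - k) = ∑ k ∈ G, f k := by
  refine sum_bij_ne_zero (fun k _ _ => a - k) (fun k _ hk => ?_)
    (fun _ _ _ _ _ _ h => sub_right_injective h)
    (fun k _ hfk => ⟨a - k, ?_, by simpa using hfk, sub_sub_cancel a k⟩) (fun _ _ _ => rfl)
  · by_contra h
    exact hk (hf _ h)
  · by_contra h
    exact hfk (hf' k h)

lemma EuclideanSpace.real_inner_eq_re_inner {ι : Type*} [Fintype ι] (x y : EuclideanSpace ℂ ι) :
    inner ℝ x y = (inner ℂ x y).re := by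
  simp [PiLp.inner_apply, Complex.re_sum]

lemma inner_ofReal_smul_self_sub {E : Type*} [NormedAddCommGroup E] [InnerProductSpace ℂ E]
    (r : ℝ) (c : ℂ) (x y : E) :
    inner ℂ x ((r : ℂ) • x - c • y) = ((r * ‖x‖ ^ 2 : ℝ) : ℂ) - c * inner ℂ x y := by
  rw [inner_sub_right, inner_smul_right, inner_smul_right, inner_self_eq_norm_sq_to_K]
  push_cast
  rfl

lemma le_mul_exp_of_hasDerivWithinAt_le {s : Set ℝ} (hs : Convex ℝ s) {f f' : ℝ → ℝ} {c : ℝ}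
    (hf : ∀ x ∈ s, HasDerivWithinAt f (f' x) s x) (hf' : ∀ x ∈ s, f' x ≤ c * f x)
    {a b : ℝ} (ha : a ∈ s) (hb : b ∈ s) (hab : a ≤ b) :
    f b ≤ f a * Real.exp (c * (b - a)) := by
  set g := fun x => f x * Real.exp (-(c * x))
  have hg : ∀ x ∈ s, HasDerivWithinAt g
      (f' x * Real.exp (-(c * x)) + f x * (Real.exp (-(c * x)) * -(c * 1))) s x := fun x hx =>
    (hf x hx).mul (((hasDerivAt_id x).const_mul c).neg.exp.hasDerivWithinAt)
  have hanti : AntitoneOn g s := by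
    refine antitoneOn_of_hasDerivWithinAt_nonpos hs (fun x hx => (hg x hx).continuousWithinAt)
      (fun x hx => (hg x (interior_subset hx)).mono interior_subset) fun x hx => ?_
    nlinarith [hf' x (interior_subset hx), Real.exp_pos (-(c * x))]
  have hgab : f b * Real.exp (-(c * b)) ≤ f a * Real.exp (-(c * a)) := hanti ha hb hab
  calc f b = f b * Real.exp (-(c * b)) * Real.exp (c * b) := by
        rw [mul_assoc, ← Real.exp_add, neg_add_cancel, Real.exp_zero, mul_one]
    _ ≤ f a * Real.exp (-(c * a)) * Real.exp (c * b) :=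
        mul_le_mul_of_nonneg_right hgab (Real.exp_pos _).le
    _ = f a * Real.exp (c * (b - a)) := by
        rw [mul_assoc, ← Real.exp_add]
        ring_nf

section Modes

variable {d : ℕ}

lemma zdot_sub (k h : Fin d → ℤ) (x : EuclideanSpace ℂ (Fin d)) :
    zdot (k - h) x = zdot k x - zdot h x := by
  simp [zdot, sub_mul, sum_sub_distrib]

lemma zdot_neg (k : Fin d → ℤ) (x : EuclideanSpace ℂ (Fin d)) : zdot (-k) x = -zdot k x := by
  simp [zdot, sum_neg_distrib]

lemma one_le_knormSq {k : Fin d → ℤ} (hk : k ≠ 0) : 1 ≤ knormSq k := by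
  obtain ⟨i, hi⟩ := Function.ne_iff.mp hk
  have hki : (1 : ℝ) ≤ (k i : ℝ) ^ 2 := by
    rw [← Int.cast_pow, ← Int.cast_one, Int.cast_le]
    nlinarith [Int.one_le_abs hi, sq_abs (k i)]
  exact hki.trans (single_le_sum (fun j _ => sq_nonneg (k j : ℝ)) (mem_univ i))

lemma inner_intVec (k : Fin d → ℤ) (x : EuclideanSpace ℂ (Fin d)) :
    inner ℂ x (intVec k) = conj (zdot k x) := by
  simp [EuclideanSpace.inner_eq_star_dotProduct, intVec, zdot, dotProduct, map_sum]

lemma inner_leray_of_zdot_eq_zero {k : Fin d → ℤ} {x : EuclideanSpace ℂ (Fin d)}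
    (hx : zdot k x = 0) (y : EuclideanSpace ℂ (Fin d)) :
    inner ℂ x (leray k y) = inner ℂ x y := by
  rw [leray, inner_sub_right, inner_smul_right, inner_intVec, hx, map_zero, mul_zero, sub_zero]

lemma inner_eq_dotProduct_of_conj {x w : EuclideanSpace ℂ (Fin d)} (hw : ∀ i, w i = conj (x i))
    (y : EuclideanSpace ℂ (Fin d)) : inner ℂ x y = y ⬝ᵥ w := by
  rw [EuclideanSpace.inner_eq_star_dotProduct]
  congr 1
  funext i
  exact (hw i).symm

end Modes

section Convection

variable {d : ℕ} (G : Finset (Fin d → ℤ))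

/-- The Fourier mode `k` of the Leray-projected transport term `ℒ[(u·∇) v]`, up to the factor
`i (2π)^{-d/2}`. -/
noncomputable def convection (u v : (Fin d → ℤ) → EuclideanSpace ℂ (Fin d)) (k : Fin d → ℤ) :
    EuclideanSpace ℂ (Fin d) :=
  ∑ h ∈ G, zdot (k - h) (u h) • leray k (v (k - h))

/-- The trilinear form `∫ ((u·∇) v)·w` in Fourier variables, up to a constant factor. -/
def trilin (u v w : (Fin d → ℤ) → EuclideanSpace ℂ (Fin d)) : ℂ :=
  ∑ k ∈ G, ∑ h ∈ G, zdot (k - h) (u h) * (v (k - h) ⬝ᵥ w (-k))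

variable {G}

lemma sum_inner_convection {u v w : (Fin d → ℤ) → EuclideanSpace ℂ (Fin d)}
    (hreal : ∀ k ∈ G, ∀ i, w (-k) i = conj (w k i)) (hdiv : ∀ k ∈ G, zdot k (w k) = 0) :
    ∑ k ∈ G, inner ℂ (w k) (convection G u v k) = trilin G u v w := by
  refine sum_congr rfl fun k hk => ?_
  rw [convection, inner_sum]
  refine sum_congr rfl fun h _ => ?_
  rw [inner_smul_right, inner_leray_of_zdot_eq_zero (hdiv k hk),
    inner_eq_dotProduct_of_conj (hreal k hk)]

lemma trilin_swap (hsym : ∀ k ∈ G, -k ∈ G) {u v w : (Fin d → ℤ) → EuclideanSpace ℂ (Fin d)}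
    (hv : ∀ k ∉ G, v k = 0) (hw : ∀ k ∉ G, w k = 0) (hdiv : ∀ h ∈ G, zdot h (u h) = 0) :
    trilin G u w v = -trilin G u v w := by
  have hneg : ∀ k, -k ∉ G → k ∉ G := fun k hk hkG => hk (hsym k hkG)
  rw [trilin, trilin]
  conv_lhs => rw [sum_comm]
  conv_rhs => rw [sum_comm]
  rw [← sum_neg_distrib]
  refine sum_congr rfl fun h hh => ?_
  rw [← sum_comp_sub_left h, ← sum_neg_distrib]
  · refine sum_congr rfl fun k _ => ?_
    rw [sub_sub_cancel_left, neg_sub, zdot_neg, zdot_sub k h, hdiv h hh, sub_zero, dotProduct_comm]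
    ring
  · intro k hk
    simp [hv _ (hneg (-k) (by rwa [neg_neg]))]
  · intro k hk
    simp [hw _ (hneg _ (by rwa [neg_sub]))]

lemma sum_inner_mhd_nonlinearity (hsym : ∀ k ∈ G, -k ∈ G)
    {u b : (Fin d → ℤ) → EuclideanSpace ℂ (Fin d)}
    (hu : ∀ k ∉ G, u k = 0) (hb : ∀ k ∉ G, b k = 0)
    (hu_real : ∀ k ∈ G, ∀ i, u (-k) i = conj (u k i))
    (hb_real : ∀ k ∈ G, ∀ i, b (-k) i = conj (b k i))
    (hu_div : ∀ k ∈ G, zdot k (u k) = 0) (hb_div : ∀ k ∈ G, zdot k (b k) = 0) :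
    ∑ k ∈ G, (inner ℂ (u k) (convection G u u k - convection G b b k)
      + inner ℂ (b k) (convection G u b k - convection G b u k)) = 0 := by
  simp only [inner_sub_right, sum_add_distrib, sum_sub_distrib,
    sum_inner_convection hu_real hu_div, sum_inner_convection hb_real hb_div]
  linear_combination trilin_swap hsym hu hu hu_div / 2 + trilin_swap hsym hb hb hu_div / 2
    - trilin_swap hsym hb hu hb_div

end Convection

lemma convex_galDomain (T : EReal) : Convex ℝ (galDomain T) :=
  Set.OrdConnected.convex ⟨fun _ hx _ hy _ hz =>
    ⟨hx.1.trans hz.1, (EReal.coe_le_coe_iff.2 hz.2).trans_lt hy.2⟩⟩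

section Energy

variable {d : ℕ} {ν η : ℝ} {G : Finset (Fin d → ℤ)}

lemma dissipation_le (hν : 0 ≤ ν) (hη : 0 ≤ η) (h0 : (0 : Fin d → ℤ) ∉ G)
    (u b : (Fin d → ℤ) → EuclideanSpace ℂ (Fin d)) :
    -2 * (∑ k ∈ G, knormSq k * (ν * ‖u k‖ ^ 2 + η * ‖b k‖ ^ 2))
      ≤ -2 * min ν η * ∑ k ∈ G, (‖u k‖ ^ 2 + ‖b k‖ ^ 2) := by
  have hterm : ∀ k ∈ G, min ν η * (‖u k‖ ^ 2 + ‖b k‖ ^ 2)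
      ≤ knormSq k * (ν * ‖u k‖ ^ 2 + η * ‖b k‖ ^ 2) := by
    intro k hk
    calc min ν η * (‖u k‖ ^ 2 + ‖b k‖ ^ 2) ≤ ν * ‖u k‖ ^ 2 + η * ‖b k‖ ^ 2 := by
          nlinarith [min_le_left ν η, min_le_right ν η, sq_nonneg ‖u k‖, sq_nonneg ‖b k‖]
      _ ≤ knormSq k * (ν * ‖u k‖ ^ 2 + η * ‖b k‖ ^ 2) :=
          le_mul_of_one_le_left (by positivity) (one_le_knormSq (ne_of_mem_of_not_mem hk h0))
  have hsum := sum_le_sum hterm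
  rw [← mul_sum] at hsum
  linarith

lemma hasDerivWithinAt_energy (hsym : ∀ k ∈ G, -k ∈ G) {T : EReal}
    {γ β : (Fin d → ℤ) → ℝ → EuclideanSpace ℂ (Fin d)} (hsol : IsGalerkinSolution ν η G T γ β)
    {t : ℝ} (ht : t ∈ galDomain T)
    (hγ_real : ∀ k ∈ G, ∀ i, γ (-k) t i = conj (γ k t i))
    (hβ_real : ∀ k ∈ G, ∀ i, β (-k) t i = conj (β k t i))
    (hγ_div : ∀ k ∈ G, zdot k (γ k t) = 0) (hβ_div : ∀ k ∈ G, zdot k (β k t) = 0) :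
    HasDerivWithinAt (fun s => ∑ k ∈ G, (‖γ k s‖ ^ 2 + ‖β k s‖ ^ 2))
      (-2 * ∑ k ∈ G, knormSq k * (ν * ‖γ k t‖ ^ 2 + η * ‖β k t‖ ^ 2)) (galDomain T) t := by
  set c : ℂ := Complex.I * (((2 * Real.pi) ^ (-(d : ℝ) / 2) : ℝ) : ℂ)
  set u := fun k => γ k t
  set b := fun k => β k t
  have hγ : ∀ k ∈ G, HasDerivWithinAt (γ k) (((-(ν * knormSq k) : ℝ) : ℂ) • γ k t
      - c • (convection G u u k - convection G b b k)) (galDomain T) t := fun k hk => by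
    simpa only [convection, sum_sub_distrib] using (hsol.2 k hk t ht).1
  have hβ : ∀ k ∈ G, HasDerivWithinAt (β k) (((-(η * knormSq k) : ℝ) : ℂ) • β k t
      - c • (convection G u b k - convection G b u k)) (galDomain T) t := fun k hk => by
    simpa only [convection, sum_sub_distrib] using (hsol.2 k hk t ht).2
  have hnonlin := sum_inner_mhd_nonlinearity hsym (u := u) (b := b)
    (fun k hk => (hsol.1 k hk t).1) (fun k hk => (hsol.1 k hk t).2)
    hγ_real hβ_real hγ_div hβ_div
  refine (HasDerivWithinAt.fun_sum fun k hk =>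
    (hγ k hk).norm_sq.add (hβ k hk).norm_sq).congr_deriv ?_
  have hbalance : ∑ k ∈ G, (((-(ν * knormSq k) * ‖γ k t‖ ^ 2 : ℝ) : ℂ)
        - c * inner ℂ (u k) (convection G u u k - convection G b b k)
        + (((-(η * knormSq k) * ‖β k t‖ ^ 2 : ℝ) : ℂ)
        - c * inner ℂ (b k) (convection G u b k - convection G b u k)))
      = ((-∑ k ∈ G, knormSq k * (ν * ‖γ k t‖ ^ 2 + η * ‖β k t‖ ^ 2) : ℝ) : ℂ) := by
    rw [← sub_zero (((-∑ k ∈ G, _ : ℝ) : ℂ)), ← mul_zero c, ← hnonlin, mul_sum, ← sum_neg_distrib,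
      Complex.ofReal_sum, ← sum_sub_distrib]
    refine sum_congr rfl fun k _ => ?_
    push_cast
    ring
  simp only [EuclideanSpace.real_inner_eq_re_inner, inner_ofReal_smul_self_sub, ← mul_add,
    ← Complex.add_re, ← mul_sum, ← Complex.re_sum]
  rw [hbalance, Complex.ofReal_re]
  ring

end Energy

theorem galerkin_energy_decay_general
    {d : ℕ} (ν η : ℝ) (hν : 0 ≤ ν) (hη : 0 ≤ η)
    (G : Finset (Fin d → ℤ)) (h0 : (0 : Fin d → ℤ) ∉ G) (hsym : ∀ k ∈ G, -k ∈ G)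
    (T : EReal)
    (γ β : (Fin d → ℤ) → ℝ → EuclideanSpace ℂ (Fin d))
    (hsol : IsGalerkinSolution ν η G T γ β)
    (hreal : ∀ k ∈ G, ∀ t ∈ galDomain T,
      (∀ i, γ (-k) t i = starRingEnd ℂ (γ k t i)) ∧
      (∀ i, β (-k) t i = starRingEnd ℂ (β k t i)) ∧
      zdot k (γ k t) = 0 ∧ zdot k (β k t) = 0) :
    ∀ t ∈ galDomain T,
      HasDerivWithinAt (fun s => ∑ k ∈ G, (‖γ k s‖ ^ 2 + ‖β k s‖ ^ 2))
        (-2 * ∑ k ∈ G, knormSq k * (ν * ‖γ k t‖ ^ 2 + η * ‖β k t‖ ^ 2))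
        (galDomain T) t ∧
      -2 * (∑ k ∈ G, knormSq k * (ν * ‖γ k t‖ ^ 2 + η * ‖β k t‖ ^ 2))
        ≤ -2 * min ν η * ∑ k ∈ G, (‖γ k t‖ ^ 2 + ‖β k t‖ ^ 2) ∧
      (∑ k ∈ G, (‖γ k t‖ ^ 2 + ‖β k t‖ ^ 2))
        ≤ (∑ k ∈ G, (‖γ k 0‖ ^ 2 + ‖β k 0‖ ^ 2)) * Real.exp (-2 * min ν η * t) ∧
      (ν = 0 → η = 0 →
        (∑ k ∈ G, (‖γ k t‖ ^ 2 + ‖β k t‖ ^ 2)) = ∑ k ∈ G, (‖γ k 0‖ ^ 2 + ‖β k 0‖ ^ 2)) := by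
  have hE : ∀ x ∈ galDomain T, HasDerivWithinAt (fun s => ∑ k ∈ G, (‖γ k s‖ ^ 2 + ‖β k s‖ ^ 2))
      (-2 * ∑ k ∈ G, knormSq k * (ν * ‖γ k x‖ ^ 2 + η * ‖β k x‖ ^ 2)) (galDomain T) x :=
    fun x hx => hasDerivWithinAt_energy hsym hsol hx (fun k hk => (hreal k hk x hx).1)
      (fun k hk => (hreal k hk x hx).2.1) (fun k hk => (hreal k hk x hx).2.2.1)
      (fun k hk => (hreal k hk x hx).2.2.2)
  have hdiss : ∀ x ∈ galDomain T, -2 * ∑ k ∈ G, knormSq k * (ν * ‖γ k x‖ ^ 2 + η * ‖β k x‖ ^ 2)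
      ≤ -2 * min ν η * ∑ k ∈ G, (‖γ k x‖ ^ 2 + ‖β k x‖ ^ 2) :=
    fun x _ => dissipation_le hν hη h0 (γ · x) (β · x)
  intro t ht
  have h0t : (0 : ℝ) ∈ galDomain T := ⟨le_rfl, (EReal.coe_le_coe_iff.2 ht.1).trans_lt ht.2⟩
  refine ⟨hE t ht, hdiss t ht, ?_, fun hν0 hη0 => ?_⟩
  · simpa only [sub_zero] using
      le_mul_exp_of_hasDerivWithinAt_le (convex_galDomain T) hE hdiss h0t ht ht.1
  · have hconst := (convex_galDomain T).norm_image_sub_le_of_norm_hasDerivWithin_le hE (C := 0)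
      (fun x _ => by simp [hν0, hη0]) h0t ht
    simpa [sub_eq_zero] using hconst

/-- energy identity and decay for Galerkin solutions, Proposition 6.5. -/
theorem galerkin_energy_decay
    {d : ℕ} (hd : 2 ≤ d) (ν η : ℝ) (hν : 0 ≤ ν) (hη : 0 ≤ η)
    (G : Finset (Fin d → ℤ)) (h0 : (0 : Fin d → ℤ) ∉ G) (hsym : ∀ k ∈ G, -k ∈ G)
    (T : EReal) (hT : 0 < T)
    (γ β : (Fin d → ℤ) → ℝ → EuclideanSpace ℂ (Fin d))
    (hsol : IsGalerkinSolution ν η G T γ β)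
    (hreal : ∀ k ∈ G, ∀ t ∈ galDomain T,
      (∀ i, γ (-k) t i = starRingEnd ℂ (γ k t i)) ∧
      (∀ i, β (-k) t i = starRingEnd ℂ (β k t i)) ∧
      zdot k (γ k t) = 0 ∧ zdot k (β k t) = 0) :
    ∀ t ∈ galDomain T,
      HasDerivWithinAt (fun s => ∑ k ∈ G, (‖γ k s‖ ^ 2 + ‖β k s‖ ^ 2))
        (-2 * ∑ k ∈ G, knormSq k * (ν * ‖γ k t‖ ^ 2 + η * ‖β k t‖ ^ 2))
        (galDomain T) t ∧
      -2 * (∑ k ∈ G, knormSq k * (ν * ‖γ k t‖ ^ 2 + η * ‖β k t‖ ^ 2))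
        ≤ -2 * min ν η * ∑ k ∈ G, (‖γ k t‖ ^ 2 + ‖β k t‖ ^ 2) ∧
      (∑ k ∈ G, (‖γ k t‖ ^ 2 + ‖β k t‖ ^ 2))
        ≤ (∑ k ∈ G, (‖γ k 0‖ ^ 2 + ‖β k 0‖ ^ 2)) * Real.exp (-2 * min ν η * t) ∧
      (ν = 0 → η = 0 →
        (∑ k ∈ G, (‖γ k t‖ ^ 2 + ‖β k t‖ ^ 2)) = ∑ k ∈ G, (‖γ k 0‖ ^ 2 + ‖β k 0‖ ^ 2)) :=
  galerkin_energy_decay_general ν η hν hη G h0 hsym T γ β hsol hreal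
end
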